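/- arXiv:2203.04940 — 5 statements merged into one kernel-verified Lean document; each statement's English description precedes it below -/
import Mathlib

section
/- Let V = {1,...,d} and F : 2^V → ℝ be a normalized (F(∅)=0) non-decreasing submodular set function. Then the greedy algorithm, which starts from the empty set and at each of k steps adds the element with maximum marginal gain, returns a set Ŝ with |Ŝ| = k satisfying F(Ŝ) ≥ (1 - 1/e) · max_{|S| ≤ k} F(S). -/
/-- Greedy guarantee for normalized non-decreasing submodular functions:
the greedy chain `S 0 = ∅`, `S (t+1) = insert (argmax marginal gain) (S t)`
returns a set of cardinality `k` with `F (S k) ≥ (1 - 1/e) max_{|T| ≤ k} F T`. -/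
theorem stmt0 (d k : ℕ) (F : Finset (Fin d) → ℝ)
    (hnorm : F ∅ = 0)
    (hmono : ∀ S T : Finset (Fin d), S ⊆ T → F S ≤ F T)
    (hsub : ∀ S T : Finset (Fin d), S ⊆ T → ∀ i ∉ T,
      F (insert i T) - F T ≤ F (insert i S) - F S)
    (S : ℕ → Finset (Fin d)) (hS0 : S 0 = ∅)
    (hstep : ∀ t < k, ∃ i ∉ S t, S (t + 1) = insert i (S t) ∧
      ∀ j ∉ S t, F (insert j (S t)) ≤ F (insert i (S t))) :
    (S k).card = k ∧
      ∀ T : Finset (Fin d), T.card ≤ k →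
        (1 - Real.exp (-1)) * F T ≤ F (S k) := by
  have hcard : ∀ t ≤ k, (S t).card = t := by
    intro t ht
    induction t with
    | zero => simp [hS0]
    | succ n ih =>
      obtain ⟨i, hi, hSn, _⟩ := hstep n (lt_of_lt_of_le (Nat.lt_succ_self n) ht)
      rw [hSn, Finset.card_insert_of_notMem hi, ih (le_trans (Nat.le_succ n) ht)]
  refine ⟨hcard k le_rfl, ?_⟩
  intro T hT
  have hT0 : 0 ≤ F T := hnorm ▸ hmono ∅ T (Finset.empty_subset T)
  have tele : ∀ (A B : Finset (Fin d)),
      F (A ∪ B) ≤ F B + ∑ j ∈ A \ B, (F (insert j B) - F B) := by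
    intro A B
    induction A using Finset.induction_on with
    | empty => simp
    | @insert a A ha ih =>
      by_cases hb : a ∈ B
      · have h1 : insert a A ∪ B = A ∪ B := by
          rw [Finset.insert_union, Finset.insert_eq_self.mpr (Finset.mem_union_right A hb)]
        have h2 : insert a A \ B = A \ B := by
          rw [Finset.insert_sdiff_of_mem _ hb]
        rw [h1, h2]; exact ih
      · have hab : a ∉ A ∪ B := by simp [ha, hb]
        have h2 : insert a A \ B = insert a (A \ B) := by
          rw [Finset.insert_sdiff_of_notMem _ hb]
        rw [Finset.insert_union, h2, Finset.sum_insert (by simp [ha])]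
        have hkey := hsub B (A ∪ B) Finset.subset_union_right a hab
        linarith [ih]
  rcases Nat.eq_zero_or_pos k with hk0 | hk
  · subst hk0
    have hTe : T = ∅ := Finset.card_eq_zero.mp (Nat.le_zero.mp hT)
    subst hTe
    simp [hnorm, hS0]
  have hkR : (0:ℝ) < k := by exact_mod_cast hk
  have h1k : (0:ℝ) ≤ 1 - 1/k := by
    rw [sub_nonneg]
    rw [div_le_one hkR]
    exact_mod_cast hk
  have step : ∀ t < k, F T - F (S (t+1)) ≤ (1 - 1/k) * (F T - F (S t)) := by
    intro t ht
    obtain ⟨i, hi, hSt1, hmax⟩ := hstep t ht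
    have hgain : 0 ≤ F (S (t+1)) - F (S t) := by
      rw [hSt1]
      linarith [hmono (S t) (insert i (S t)) (Finset.subset_insert i (S t))]
    have hbound : F T - F (S t) ≤ k * (F (S (t+1)) - F (S t)) := by
      have h1 : F T ≤ F (T ∪ S t) := hmono T _ Finset.subset_union_left
      have h2 := tele T (S t)
      have h3 : ∑ j ∈ T \ S t, (F (insert j (S t)) - F (S t))
          ≤ (T \ S t).card * (F (S (t+1)) - F (S t)) := by
        rw [hSt1]
        calc ∑ j ∈ T \ S t, (F (insert j (S t)) - F (S t))
            ≤ ∑ _j ∈ T \ S t, (F (insert i (S t)) - F (S t)) := by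
              apply Finset.sum_le_sum
              intro j hj
              have hjn : j ∉ S t := (Finset.mem_sdiff.mp hj).2
              linarith [hmax j hjn]
          _ = (T \ S t).card * (F (insert i (S t)) - F (S t)) := by
              rw [Finset.sum_const, nsmul_eq_mul]
      have h4 : ((T \ S t).card : ℝ) ≤ k := by
        exact_mod_cast le_trans (Finset.card_le_card Finset.sdiff_subset) hT
      nlinarith [mul_le_mul_of_nonneg_right h4 hgain]
    have h5 : (F T - F (S t)) / k ≤ F (S (t+1)) - F (S t) := by
      rw [div_le_iff₀ hkR]; linarith
    have heq : (1 - 1/(k:ℝ)) * (F T - F (S t))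
        = (F T - F (S t)) - (F T - F (S t))/k := by ring
    linarith
  have main : ∀ t ≤ k, F T - F (S t) ≤ (1 - 1/(k:ℝ))^t * F T := by
    intro t ht
    induction t with
    | zero => simp [hS0, hnorm]
    | succ n ih =>
      have hn : n < k := lt_of_lt_of_le (Nat.lt_succ_self n) ht
      have h1 := step n hn
      have h2 := ih (le_of_lt hn)
      calc F T - F (S (n+1)) ≤ (1 - 1/k) * (F T - F (S n)) := h1
        _ ≤ (1 - 1/k) * ((1 - 1/(k:ℝ))^n * F T) := by
            exact mul_le_mul_of_nonneg_left h2 h1k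
        _ = (1 - 1/(k:ℝ))^(n+1) * F T := by ring
  have hexp : (1 - 1/(k:ℝ))^k ≤ Real.exp (-1) := by
    have h := Real.add_one_le_exp (-(1/(k:ℝ)))
    have hpow : (1 - 1/(k:ℝ))^k ≤ (Real.exp (-(1/(k:ℝ))))^k :=
      pow_le_pow_left₀ h1k (by linarith) k
    rwa [← Real.exp_nat_mul, mul_neg, mul_one_div, div_self (ne_of_gt hkR)] at hpow
  have hfin := main k le_rfl
  have hmul : (1 - 1/(k:ℝ))^k * F T ≤ Real.exp (-1) * F T :=
    mul_le_mul_of_nonneg_right hexp hT0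
  linarith
end

section
/- Let F : 2^V → ℝ₊ be a normalized non-decreasing set function that is γ-weakly submodular for parameter γ ∈ (0,1] (i.e., γ·(F(S ∪ L) - F(L)) ≤ Σ_{i∈S} (F(L ∪ {i}) - F(L)) for all disjoint L, S ⊆ V with |S| ≤ k). Then the greedy algorithm with budget k returns Ŝ satisfying F(Ŝ) ≥ (1 - e^{-γ}) · max_{|S| ≤ k} F(S). -/
/-!
Weak submodularity bounds the gap `F T - F A` by `k/γ` times the largest marginal gain at `A`,
which is the gain the greedy step realises. Each step therefore closes a `γ/k` fraction of the
gap, so after `k` steps the gap is at most `(1 - γ/k)^k F T ≤ e^{-γ} F T`.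
-/

open Finset

variable {α : Type*} [DecidableEq α]

def WeaklySubmodular (γ : ℝ) (k : ℕ) (F : Finset α → ℝ) : Prop :=
  ∀ L T : Finset α, Disjoint L T → T.card ≤ k →
    γ * (F (L ∪ T) - F L) ≤ ∑ i ∈ T, (F (insert i L) - F L)

def IsGreedySeq (F : Finset α → ℝ) (k : ℕ) (S : ℕ → Finset α) : Prop :=
  ∀ t < k, ∃ i ∉ S t, S (t + 1) = insert i (S t) ∧
    ∀ j ∉ S t, F (insert j (S t)) ≤ F (insert i (S t))

namespace WeaklySubmodular

variable {γ : ℝ} {k : ℕ} {F : Finset α → ℝ} {A T : Finset α} {i : α}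

theorem mul_sub_le_mul_greedy_gain (hF : WeaklySubmodular γ k F) (hγ : 0 ≤ γ)
    (hmono : Monotone F) (hT : T.card ≤ k)
    (hmax : ∀ j ∉ A, F (insert j A) ≤ F (insert i A)) :
    γ * (F T - F A) ≤ k * (F (insert i A) - F A) := by
  have hgain : 0 ≤ F (insert i A) - F A := sub_nonneg.2 (hmono (subset_insert i A))
  have hcard : (T \ A).card ≤ k := (card_le_card sdiff_subset).trans hT
  calc γ * (F T - F A) ≤ γ * (F (A ∪ (T \ A)) - F A) := by
        gcongr
        exact hmono (union_sdiff_self_eq_union (s := A) (t := T) ▸ subset_union_right)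
    _ ≤ ∑ j ∈ T \ A, (F (insert j A) - F A) := hF A (T \ A) disjoint_sdiff hcard
    _ ≤ ∑ _j ∈ T \ A, (F (insert i A) - F A) :=
        sum_le_sum fun j hj ↦ sub_le_sub_right (hmax j (mem_sdiff.1 hj).2) _
    _ = (T \ A).card * (F (insert i A) - F A) := by rw [sum_const, nsmul_eq_mul]
    _ ≤ k * (F (insert i A) - F A) := by gcongr

theorem sub_greedy_le (hF : WeaklySubmodular γ k F) (hγ : 0 ≤ γ) (hk : 0 < k)
    (hmono : Monotone F) (hT : T.card ≤ k)
    (hmax : ∀ j ∉ A, F (insert j A) ≤ F (insert i A)) :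
    F T - F (insert i A) ≤ (1 - γ / k) * (F T - F A) := by
  have hkR : (0 : ℝ) < k := by exact_mod_cast hk
  have hclosed : γ / k * (F T - F A) ≤ F (insert i A) - F A := by
    rw [div_mul_eq_mul_div, div_le_iff₀ hkR, mul_comm _ (k : ℝ)]
    exact hF.mul_sub_le_mul_greedy_gain hγ hmono hT hmax
  linarith

end WeaklySubmodular

namespace IsGreedySeq

variable {γ : ℝ} {k : ℕ} {F : Finset α → ℝ} {S : ℕ → Finset α} {T : Finset α}

theorem sub_le_pow (hS : IsGreedySeq F k S) (hF : WeaklySubmodular γ k F) (hγ : 0 ≤ γ)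
    (hγk : γ ≤ k) (hmono : Monotone F) (hT : T.card ≤ k) :
    ∀ t ≤ k, F T - F (S t) ≤ (1 - γ / k) ^ t * (F T - F (S 0)) := by
  intro t
  induction t with
  | zero => simp
  | succ t ih =>
    intro ht
    obtain ⟨i, -, hSt, hmax⟩ := hS t ht
    have hk : 0 < k := by omega
    have hc : 0 ≤ 1 - γ / k := by
      rw [sub_nonneg, div_le_one (by exact_mod_cast hk)]
      exact hγk
    calc F T - F (S (t + 1)) ≤ (1 - γ / k) * (F T - F (S t)) :=
          hSt ▸ hF.sub_greedy_le hγ hk hmono hT hmax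
      _ ≤ (1 - γ / k) * ((1 - γ / k) ^ t * (F T - F (S 0))) := by gcongr; exact ih (by omega)
      _ = (1 - γ / k) ^ (t + 1) * (F T - F (S 0)) := by ring

theorem sub_le_exp (hS : IsGreedySeq F k S) (hF : WeaklySubmodular γ k F) (hγ : 0 ≤ γ)
    (hγk : γ ≤ k) (hmono : Monotone F) (hT : T.card ≤ k) (h0 : F (S 0) ≤ F T) :
    F T - F (S k) ≤ Real.exp (-γ) * (F T - F (S 0)) :=
  calc F T - F (S k) ≤ (1 - γ / k) ^ k * (F T - F (S 0)) :=
        hS.sub_le_pow hF hγ hγk hmono hT k le_rfl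
    _ ≤ Real.exp (-γ) * (F T - F (S 0)) :=
        mul_le_mul_of_nonneg_right (Real.one_sub_div_pow_le_exp_neg hγk) (sub_nonneg.2 h0)

end IsGreedySeq

theorem stmt1_general (d k : ℕ) (F : Finset (Fin d) → ℝ) (γ : ℝ)
    (hγ0 : 0 < γ) (hγ1 : γ ≤ 1)
    (hnorm : F ∅ = 0)
    (hmono : ∀ S T : Finset (Fin d), S ⊆ T → F S ≤ F T)
    (hweak : ∀ L T : Finset (Fin d), Disjoint L T → T.card ≤ k →
      γ * (F (L ∪ T) - F L) ≤ ∑ i ∈ T, (F (insert i L) - F L))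
    (S : ℕ → Finset (Fin d)) (hS0 : S 0 = ∅)
    (hstep : ∀ t < k, ∃ i ∉ S t, S (t + 1) = insert i (S t) ∧
      ∀ j ∉ S t, F (insert j (S t)) ≤ F (insert i (S t))) :
    ∀ T : Finset (Fin d), T.card ≤ k →
      (1 - Real.exp (-γ)) * F T ≤ F (S k) := by
  intro T hT
  rcases Nat.eq_zero_or_pos k with rfl | hk
  · rw [card_eq_zero.1 (Nat.le_zero.1 hT), hS0, hnorm, mul_zero]
  have hγk : γ ≤ k := hγ1.trans (by exact_mod_cast hk)
  have h0 : F (S 0) ≤ F T := hS0 ▸ hmono ∅ T (empty_subset T)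
  have hgap := IsGreedySeq.sub_le_exp hstep hweak hγ0.le hγk hmono hT h0
  rw [hS0, hnorm] at hgap
  linarith

/-- Greedy guarantee for normalized non-decreasing `γ`-weakly submodular functions:
`F (Ŝ) ≥ (1 - e^{-γ}) max_{|T| ≤ k} F T`. -/
theorem stmt1 (d k : ℕ) (F : Finset (Fin d) → ℝ) (γ : ℝ)
    (hγ0 : 0 < γ) (hγ1 : γ ≤ 1)
    (hnorm : F ∅ = 0) (hnonneg : ∀ S, 0 ≤ F S)
    (hmono : ∀ S T : Finset (Fin d), S ⊆ T → F S ≤ F T)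
    (hweak : ∀ L T : Finset (Fin d), Disjoint L T → T.card ≤ k →
      γ * (F (L ∪ T) - F L) ≤ ∑ i ∈ T, (F (insert i L) - F L))
    (S : ℕ → Finset (Fin d)) (hS0 : S 0 = ∅)
    (hstep : ∀ t < k, ∃ i ∉ S t, S (t + 1) = insert i (S t) ∧
      ∀ j ∉ S t, F (insert j (S t)) ≤ F (insert i (S t))) :
    ∀ T : Finset (Fin d), T.card ≤ k →
      (1 - Real.exp (-γ)) * F T ≤ F (S k) :=
  stmt1_general d k F γ hγ0 hγ1 hnorm hmono hweak S hS0 hstep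
end

section
/- Let A ∈ ℝ^{n×d}, and for U ⊆ {1,...,d} and k ∈ ℕ₊ define μ = min{‖Az‖² : ‖z‖₂ = 1, ‖z‖₀ ≤ |U| + k} and ν = max{‖Az‖² : ‖z‖₂ = 1, ‖z‖₀ ≤ |U| + 1}. Let F(S) = ‖Aw‖² - min_{supp(x) ⊆ S} ‖Aw - Ax‖² for a fixed w ∈ ℝ^d. Then for every two disjoint sets L, S ⊆ {1,...,d} with L ⊆ U and |S| ≤ k, it holds that (μ/ν)·(F(S ∪ L) - F(L)) ≤ Σ_{i ∈ S} (F(L ∪ {i}) - F(L)). -/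
/-- `F S = ‖Aw‖² - min_{supp(x) ⊆ S} ‖Aw - Ax‖²`. -/
noncomputable def inChange {n d : ℕ} (A : Matrix (Fin n) (Fin d) ℝ) (w : Fin d → ℝ)
    (S : Finset (Fin d)) : ℝ :=
  (∑ i, (A.mulVec w i) ^ 2) -
    sInf {e : ℝ | ∃ x : Fin d → ℝ, (∀ j ∉ S, x j = 0) ∧
      e = ∑ i, (A.mulVec w i - A.mulVec x i) ^ 2}

/-- Values `‖Az‖²` over unit vectors `z` with at most `t` nonzero entries. -/
noncomputable def sparseQuad {n d : ℕ} (A : Matrix (Fin n) (Fin d) ℝ) (t : ℕ) : Set ℝ :=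
  {e : ℝ | ∃ z : Fin d → ℝ, (∑ i, z i ^ 2) = 1 ∧
    (Finset.univ.filter fun i => z i ≠ 0).card ≤ t ∧
    e = ∑ i, (A.mulVec z i) ^ 2}

/-!
Write `b = A w`, `a_j` for the columns of `A`, `P_T` for the orthogonal projection onto the span
of the `a_j` with `j ∈ T`, and `r = b - P_L b`. Then `F T = ‖P_T b‖²`, so for `L ⊆ T` the gain
`F T - F L` equals `‖P_T r‖²`. As `a_i` lies in the span for `L ∪ {i}`, Cauchy–Schwarz gives
`⟪r, a_i⟫² ≤ ν ‖P_{L ∪ {i}} r‖²`. Conversely `P_{S ∪ L} r = A x` with `x` supported on `S ∪ L`,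
and `r ⊥ a_j` for `j ∈ L`, so `‖A x‖² = ⟪r, A x⟫ = ∑_{j ∈ S} x_j ⟪r, a_j⟫`; Cauchy–Schwarz together
with `μ ‖x‖² ≤ ‖A x‖²` yields `μ ‖P_{S ∪ L} r‖² ≤ ∑_{j ∈ S} ⟪r, a_j⟫²`.
-/

open Finset Matrix
open scoped RealInnerProductSpace

namespace Submodule

variable {E : Type*} [NormedAddCommGroup E] [InnerProductSpace ℝ E]
  (K : Submodule ℝ E) [K.HasOrthogonalProjection]

theorem isLeast_norm_sub_sq (b : E) :
    IsLeast {e | ∃ v ∈ K, e = ‖b - v‖ ^ 2} (‖b - K.starProjection b‖ ^ 2) := by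
  refine ⟨⟨_, K.starProjection_apply_mem b, rfl⟩, ?_⟩
  rintro e ⟨v, hv, rfl⟩
  gcongr
  rw [starProjection_minimal]
  exact ciInf_le ⟨0, Set.forall_mem_range.2 fun _ => norm_nonneg _⟩ (⟨v, hv⟩ : K)

theorem norm_sq_sub_norm_sub_starProjection_sq (b : E) :
    ‖b‖ ^ 2 - ‖b - K.starProjection b‖ ^ 2 = ‖K.starProjection b‖ ^ 2 := by
  rw [← starProjection_orthogonal_val, K.norm_sq_eq_add_norm_sq_starProjection b]
  ring

theorem norm_starProjection_sq_eq_inner (r : E) :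
    ‖K.starProjection r‖ ^ 2 = ⟪r, K.starProjection r⟫ := by
  rw [← real_inner_self_eq_norm_sq, inner_starProjection_left_eq_right,
    starProjection_eq_self_iff.2 (K.starProjection_apply_mem r)]

theorem inner_sq_le_norm_starProjection_sq_mul {a : E} (ha : a ∈ K) (r : E) :
    ⟪r, a⟫ ^ 2 ≤ ‖K.starProjection r‖ ^ 2 * ‖a‖ ^ 2 := by
  rw [← starProjection_eq_self_iff.2 ha, ← inner_starProjection_left_eq_right,
    starProjection_eq_self_iff.2 ha, ← mul_pow]
  exact sq_le_sq' (abs_le.1 (abs_real_inner_le_norm _ _)).1 (real_inner_le_norm _ _)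

theorem norm_starProjection_sq_sub_of_le {K' : Submodule ℝ E} [K'.HasOrthogonalProjection]
    (h : K ≤ K') (b : E) :
    ‖K'.starProjection b‖ ^ 2 - ‖K.starProjection b‖ ^ 2 =
      ‖K'.starProjection (b - K.starProjection b)‖ ^ 2 := by
  have hK' : K'.starProjection (K.starProjection b) = K.starProjection b :=
    starProjection_eq_self_iff.2 (h (K.starProjection_apply_mem b))
  have horth : ⟪K.starProjection b, K'.starProjection (b - K.starProjection b)⟫ = 0 := by
    rw [← inner_starProjection_left_eq_right, hK']
    exact K.inner_right_of_mem_orthogonal (K.starProjection_apply_mem b)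
      (K.sub_starProjection_mem_orthogonal b)
  have hsplit : K'.starProjection b =
      K.starProjection b + K'.starProjection (b - K.starProjection b) := by
    rw [map_sub, hK', add_sub_cancel]
  rw [hsplit, norm_add_sq_real, horth]
  ring

end Submodule

namespace Matrix

variable {m ι : Type*} [Fintype ι]

noncomputable def euclideanMulVec (A : Matrix m ι ℝ) : (ι → ℝ) →ₗ[ℝ] EuclideanSpace ℝ m :=
  (WithLp.linearEquiv 2 ℝ (m → ℝ)).symm.toLinearMap ∘ₗ A.mulVecLin

theorem norm_euclideanMulVec_sq [Fintype m] (A : Matrix m ι ℝ) (x : ι → ℝ) :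
    ‖A.euclideanMulVec x‖ ^ 2 = ∑ i, (A *ᵥ x) i ^ 2 :=
  EuclideanSpace.real_norm_sq_eq _

theorem norm_euclideanMulVec_sub_sq [Fintype m] (A : Matrix m ι ℝ) (x y : ι → ℝ) :
    ‖A.euclideanMulVec x - A.euclideanMulVec y‖ ^ 2 = ∑ i, ((A *ᵥ x) i - (A *ᵥ y) i) ^ 2 := by
  rw [← map_sub, norm_euclideanMulVec_sq, mulVec_sub]
  rfl

theorem inner_euclideanMulVec [Fintype m] [DecidableEq ι] (A : Matrix m ι ℝ)
    (v : EuclideanSpace ℝ m) (x : ι → ℝ) :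
    ⟪v, A.euclideanMulVec x⟫ = ∑ j, x j * ⟪v, A.euclideanMulVec (Pi.single j 1)⟫ := by
  conv_lhs => rw [pi_eq_sum_univ' x]
  simp only [map_sum, map_smul, inner_sum, real_inner_smul_right]

/-- The span of the columns of `A` indexed by `S`. -/
noncomputable def colSpan (A : Matrix m ι ℝ) (S : Finset ι) : Submodule ℝ (EuclideanSpace ℝ m) :=
  (Submodule.pi (↑S)ᶜ fun _ => ⊥).map A.euclideanMulVec

theorem mem_colSpan {A : Matrix m ι ℝ} {S : Finset ι} {v : EuclideanSpace ℝ m} :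
    v ∈ A.colSpan S ↔ ∃ x : ι → ℝ, (∀ j ∉ S, x j = 0) ∧ A.euclideanMulVec x = v := by
  simp [colSpan, Submodule.mem_pi]

theorem colSpan_mono (A : Matrix m ι ℝ) {S T : Finset ι} (h : S ⊆ T) :
    A.colSpan S ≤ A.colSpan T := by
  intro v hv
  obtain ⟨x, hx, rfl⟩ := mem_colSpan.1 hv
  exact mem_colSpan.2 ⟨x, fun j hj => hx j fun hjS => hj (h hjS), rfl⟩

theorem euclideanMulVec_single_mem_colSpan [DecidableEq ι] (A : Matrix m ι ℝ) {S : Finset ι}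
    {j : ι} (hj : j ∈ S) : A.euclideanMulVec (Pi.single j 1) ∈ A.colSpan S :=
  mem_colSpan.2 ⟨_, fun _ hi => Pi.single_eq_of_ne (ne_of_mem_of_not_mem hj hi).symm 1, rfl⟩

end Matrix

section SparseEigenvalues

variable {n d : ℕ} (A : Matrix (Fin n) (Fin d) ℝ)

theorem nonneg_of_mem_sparseQuad {t : ℕ} {e : ℝ} (he : e ∈ sparseQuad A t) : 0 ≤ e := by
  obtain ⟨z, -, -, rfl⟩ := he
  positivity

theorem bddAbove_sparseQuad (t : ℕ) : BddAbove (sparseQuad A t) := by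
  refine ⟨∑ i, ∑ j, A i j ^ 2, ?_⟩
  rintro e ⟨z, hz, -, rfl⟩
  gcongr with i
  simpa [Matrix.mulVec, dotProduct, hz] using sum_mul_sq_le_sq_mul_sq univ (A i) z

theorem sInf_sparseQuad_mul_le {t : ℕ} {T : Finset (Fin d)} (hT : T.card ≤ t) {x : Fin d → ℝ}
    (hx : ∀ j ∉ T, x j = 0) :
    sInf (sparseQuad A t) * ∑ j, x j ^ 2 ≤ ∑ i, (A *ᵥ x) i ^ 2 := by
  set s := ∑ j, x j ^ 2
  rcases (show 0 ≤ s by positivity).eq_or_lt with hs | hs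
  · rw [← hs, mul_zero]
    positivity
  set c := (√s)⁻¹
  have hc : c ^ 2 * s = 1 := by simp [c, inv_pow, Real.sq_sqrt hs.le, hs.ne']
  have hmem : c ^ 2 * ∑ i, (A *ᵥ x) i ^ 2 ∈ sparseQuad A t := by
    refine ⟨c • x, ?_, ?_, ?_⟩
    · simpa [mul_pow, ← mul_sum] using hc
    · refine (card_le_card fun j hj => ?_).trans hT
      by_contra hjT
      exact (mem_filter.1 hj).2 (by simp [hx j hjT])
    · simp [Matrix.mulVec_smul, mul_pow, mul_sum]
  calc sInf (sparseQuad A t) * s ≤ (c ^ 2 * ∑ i, (A *ᵥ x) i ^ 2) * s := by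
        gcongr
        exact csInf_le ⟨0, fun _ => nonneg_of_mem_sparseQuad A⟩ hmem
    _ = ∑ i, (A *ᵥ x) i ^ 2 := by rw [mul_right_comm, hc, one_mul]

theorem norm_euclideanMulVec_single_sq_le_sSup_sparseQuad {t : ℕ} (ht : 1 ≤ t) (j : Fin d) :
    ‖A.euclideanMulVec (Pi.single j 1)‖ ^ 2 ≤ sSup (sparseQuad A t) := by
  refine le_csSup (bddAbove_sparseQuad A t)
    ⟨Pi.single j 1, by simp [Pi.single_apply], ?_, A.norm_euclideanMulVec_sq _⟩
  have hsupp : (univ.filter fun i => (Pi.single j 1 : Fin d → ℝ) i ≠ 0) = {j} := by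
    ext i
    simp [Pi.single_apply]
  rwa [hsupp, card_singleton]

end SparseEigenvalues

section SparseRegression

variable {n d : ℕ} (A : Matrix (Fin n) (Fin d) ℝ) (w : Fin d → ℝ)

theorem inChange_eq_norm_starProjection_sq (S : Finset (Fin d)) :
    inChange A w S = ‖(A.colSpan S).starProjection (A.euclideanMulVec w)‖ ^ 2 := by
  have hset : {e : ℝ | ∃ x : Fin d → ℝ, (∀ j ∉ S, x j = 0) ∧
      e = ∑ i, ((A *ᵥ w) i - (A *ᵥ x) i) ^ 2} =
      {e | ∃ v ∈ A.colSpan S, e = ‖A.euclideanMulVec w - v‖ ^ 2} := by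
    ext e
    constructor
    · rintro ⟨x, hx, rfl⟩
      exact ⟨_, mem_colSpan.2 ⟨x, hx, rfl⟩, (A.norm_euclideanMulVec_sub_sq w x).symm⟩
    · rintro ⟨_, hv, rfl⟩
      obtain ⟨x, hx, rfl⟩ := mem_colSpan.1 hv
      exact ⟨x, hx, A.norm_euclideanMulVec_sub_sq w x⟩
  rw [inChange, hset, ((A.colSpan S).isLeast_norm_sub_sq _).csInf_eq, ← norm_euclideanMulVec_sq,
    Submodule.norm_sq_sub_norm_sub_starProjection_sq]

noncomputable def regressionResidual (L : Finset (Fin d)) : EuclideanSpace ℝ (Fin n) :=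
  A.euclideanMulVec w - (A.colSpan L).starProjection (A.euclideanMulVec w)

theorem inChange_sub_inChange_of_subset {L T : Finset (Fin d)} (h : L ⊆ T) :
    inChange A w T - inChange A w L =
      ‖(A.colSpan T).starProjection (regressionResidual A w L)‖ ^ 2 := by
  rw [inChange_eq_norm_starProjection_sq, inChange_eq_norm_starProjection_sq,
    Submodule.norm_starProjection_sq_sub_of_le _ (A.colSpan_mono h), regressionResidual]

theorem inner_regressionResidual_sq_le {t : ℕ} (ht : 1 ≤ t) (L : Finset (Fin d)) (i : Fin d) :
    ⟪regressionResidual A w L, A.euclideanMulVec (Pi.single i 1)⟫ ^ 2 ≤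
      sSup (sparseQuad A t) * (inChange A w (insert i L) - inChange A w L) := by
  rw [inChange_sub_inChange_of_subset A w (subset_insert i L), mul_comm]
  calc _ ≤ ‖(A.colSpan (insert i L)).starProjection (regressionResidual A w L)‖ ^ 2 *
        ‖A.euclideanMulVec (Pi.single i 1)‖ ^ 2 :=
        Submodule.inner_sq_le_norm_starProjection_sq_mul _
          (A.euclideanMulVec_single_mem_colSpan (mem_insert_self i L)) _
    _ ≤ _ := by gcongr; exact norm_euclideanMulVec_single_sq_le_sSup_sparseQuad A ht i

theorem sInf_sparseQuad_mul_le_sum_inner_regressionResidual_sq {t : ℕ} {L S : Finset (Fin d)}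
    (hdisj : Disjoint L S) (hcard : (S ∪ L).card ≤ t) :
    sInf (sparseQuad A t) * (inChange A w (S ∪ L) - inChange A w L) ≤
      ∑ j ∈ S, ⟪regressionResidual A w L, A.euclideanMulVec (Pi.single j 1)⟫ ^ 2 := by
  rw [inChange_sub_inChange_of_subset A w subset_union_right]
  set r := regressionResidual A w L
  set g : Fin d → ℝ := fun j => ⟪r, A.euclideanMulVec (Pi.single j 1)⟫
  set D := ‖(A.colSpan (S ∪ L)).starProjection r‖ ^ 2
  set μ := sInf (sparseQuad A t)
  obtain ⟨x, hx, hxr⟩ := mem_colSpan.1 ((A.colSpan (S ∪ L)).starProjection_apply_mem r)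
  have hrL : ∀ j ∈ L, g j = 0 := fun j hj =>
    Submodule.inner_left_of_mem_orthogonal (A.euclideanMulVec_single_mem_colSpan hj)
      ((A.colSpan L).sub_starProjection_mem_orthogonal _)
  have hD : D = ∑ j ∈ S, x j * g j := by
    dsimp only [D]
    rw [Submodule.norm_starProjection_sq_eq_inner, ← hxr, inner_euclideanMulVec,
      ← sum_subset (subset_univ (S ∪ L)) fun j _ hj => by simp [hx j hj],
      sum_union hdisj.symm, sum_eq_zero (s := L) fun j hj => by simp [g, hrL j hj], add_zero]
  have hCS : D ^ 2 ≤ (∑ j, x j ^ 2) * ∑ j ∈ S, g j ^ 2 := by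
    rw [hD]
    refine (sum_mul_sq_le_sq_mul_sq S x g).trans ?_
    gcongr
    exact subset_univ S
  have hμx : μ * ∑ j, x j ^ 2 ≤ D := by
    simpa [D, ← hxr, norm_euclideanMulVec_sq] using sInf_sparseQuad_mul_le A hcard hx
  have hμ : 0 ≤ μ := Real.sInf_nonneg fun _ => nonneg_of_mem_sparseQuad A
  rcases (show 0 ≤ D from sq_nonneg _).eq_or_lt with hD0 | hDpos
  · rw [← hD0, mul_zero]
    positivity
  refine le_of_mul_le_mul_right ?_ hDpos
  calc μ * D * D = μ * D ^ 2 := by ring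
    _ ≤ μ * ((∑ j, x j ^ 2) * ∑ j ∈ S, g j ^ 2) := by gcongr
    _ ≤ D * ∑ j ∈ S, g j ^ 2 := by rw [← mul_assoc]; gcongr
    _ = (∑ j ∈ S, g j ^ 2) * D := mul_comm _ _

end SparseRegression

theorem stmt3_general {n d : ℕ} (A : Matrix (Fin n) (Fin d) ℝ) (w : Fin d → ℝ)
    (U : Finset (Fin d)) (k : ℕ) :
    ∀ L S : Finset (Fin d), Disjoint L S → L ⊆ U → S.card ≤ k →
      (sInf (sparseQuad A (U.card + k)) / sSup (sparseQuad A (U.card + 1))) *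
          (inChange A w (S ∪ L) - inChange A w L) ≤
        ∑ i ∈ S, (inChange A w (insert i L) - inChange A w L) := by
  intro L S hdisj hLU hScard
  set ν := sSup (sparseQuad A (U.card + 1))
  have hgain : ∀ i, 0 ≤ inChange A w (insert i L) - inChange A w L := fun i => by
    rw [inChange_sub_inChange_of_subset A w (subset_insert i L)]
    positivity
  rcases (show 0 ≤ ν from Real.sSup_nonneg fun _ => nonneg_of_mem_sparseQuad A).eq_or_lt
    with hν | hν
  · rw [← hν, div_zero, zero_mul]
    exact sum_nonneg fun i _ => hgain i
  have hcard : (S ∪ L).card ≤ U.card + k :=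
    (card_union_le S L).trans (by have := card_le_card hLU; omega)
  rw [div_mul_eq_mul_div, div_le_iff₀ hν, mul_comm _ ν, mul_sum]
  calc _ ≤ ∑ j ∈ S, ⟪regressionResidual A w L, A.euclideanMulVec (Pi.single j 1)⟫ ^ 2 :=
        sInf_sparseQuad_mul_le_sum_inner_regressionResidual_sq A w hdisj hcard
    _ ≤ _ := sum_le_sum fun i _ => inner_regressionResidual_sq_le A w (by omega) L i

/-- Weak submodularity of the sparse-regression objective with ratio at least
the quotient of restricted eigenvalues `μ / ν`. -/
theorem stmt3 {n d : ℕ} (A : Matrix (Fin n) (Fin d) ℝ) (w : Fin d → ℝ)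
    (U : Finset (Fin d)) (k : ℕ) (hk : 0 < k) :
    ∀ L S : Finset (Fin d), Disjoint L S → L ⊆ U → S.card ≤ k →
      (sInf (sparseQuad A (U.card + k)) / sSup (sparseQuad A (U.card + 1))) *
          (inChange A w (S ∪ L) - inChange A w L) ≤
        ∑ i ∈ S, (inChange A w (insert i L) - inChange A w L) :=
  stmt3_general A w U k
end

section
/- Let A ∈ ℝ^{n×d} and W ∈ ℝ^{d×m}. Define F(S) = ‖AW‖²_F - min_{W̃} ‖AW - A_S W̃‖²_F. If the greedy algorithm run with budget k returns Ŝ with weights Ŵ attaining the inner minimum, and F is γ-weakly submodular on the relevant sets (γ = γ_{Ŝ, d} > 0), then ‖AW - A_{Ŝ} Ŵ‖²_F ≤ e^{-γ k / d} · ‖AW‖²_F. -/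
/-- Squared Frobenius norm. -/
noncomputable def frobSq {n m : ℕ} (M : Matrix (Fin n) (Fin m) ℝ) : ℝ :=
  ∑ p, ∑ q, (M p q) ^ 2

/-- Zero out the columns of `A` outside `S`. -/
def colZero {n d : ℕ} (A : Matrix (Fin n) (Fin d) ℝ) (S : Finset (Fin d)) :
    Matrix (Fin n) (Fin d) ℝ :=
  Matrix.of fun p j => if j ∈ S then A p j else 0

/-- `F S = ‖AW‖²_F - min_{W̃} ‖AW - A_S W̃‖²_F`. -/
noncomputable def Fmat {n d m : ℕ} (A : Matrix (Fin n) (Fin d) ℝ)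
    (W : Matrix (Fin d) (Fin m) ℝ) (S : Finset (Fin d)) : ℝ :=
  frobSq (A * W) -
    sInf {e : ℝ | ∃ Wt : Matrix (Fin d) (Fin m) ℝ, e = frobSq (A * W - colZero A S * Wt)}

lemma frobSq_nonneg {n m : ℕ} (M : Matrix (Fin n) (Fin m) ℝ) : 0 ≤ frobSq M := by
  unfold frobSq; positivity

lemma frobSq_zero {n m : ℕ} : frobSq (0 : Matrix (Fin n) (Fin m) ℝ) = 0 := by
  simp [frobSq]

lemma colZero_empty {n d : ℕ} (A : Matrix (Fin n) (Fin d) ℝ) :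
    colZero A (∅ : Finset (Fin d)) = 0 := by
  ext p j; simp [colZero]

lemma colZero_univ {n d : ℕ} (A : Matrix (Fin n) (Fin d) ℝ) :
    colZero A (Finset.univ : Finset (Fin d)) = A := by
  ext p j; simp [colZero]

lemma colZero_subset_mul {n d m : ℕ} (A : Matrix (Fin n) (Fin d) ℝ) {S S' : Finset (Fin d)}
    (h : S ⊆ S') (Wt : Matrix (Fin d) (Fin m) ℝ) :
    colZero A S' * (Matrix.of fun i q => if i ∈ S then Wt i q else 0) = colZero A S * Wt := by
  ext p q
  simp only [Matrix.mul_apply, colZero, Matrix.of_apply]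
  apply Finset.sum_congr rfl
  intro j _
  by_cases hj : j ∈ S
  · simp [hj, h hj]
  · simp [hj]

/-- Exponentially decaying layerwise error of greedy pruning:
`‖AW - A_Ŝ Ŵ‖²_F ≤ e^{-γ k / d} ‖AW‖²_F`. -/
theorem stmt7 {n d m : ℕ} (hd : 0 < d) (A : Matrix (Fin n) (Fin d) ℝ)
    (W : Matrix (Fin d) (Fin m) ℝ) (k : ℕ) (γ : ℝ) (hγ : 0 < γ)
    (S : ℕ → Finset (Fin d)) (hS0 : S 0 = ∅)
    (hstep : ∀ t < k, ∃ i ∉ S t, S (t + 1) = insert i (S t) ∧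
      ∀ j ∉ S t, Fmat A W (insert j (S t)) ≤ Fmat A W (insert i (S t)))
    (Wh : Matrix (Fin d) (Fin m) ℝ)
    (hWh : ∀ W' : Matrix (Fin d) (Fin m) ℝ,
      frobSq (A * W - colZero A (S k) * Wh) ≤ frobSq (A * W - colZero A (S k) * W'))
    (hweak : ∀ L T : Finset (Fin d), L ⊆ S k → Disjoint L T →
      γ * (Fmat A W (L ∪ T) - Fmat A W L) ≤
        ∑ i ∈ T, (Fmat A W (insert i L) - Fmat A W L)) :
    frobSq (A * W - colZero A (S k) * Wh) ≤
      Real.exp (-(γ * k / d)) * frobSq (A * W) := by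
  classical
  set M := frobSq (A * W) with hM
  set g : Finset (Fin d) → ℝ :=
    fun S' => sInf {e : ℝ | ∃ Wt : Matrix (Fin d) (Fin m) ℝ,
      e = frobSq (A * W - colZero A S' * Wt)} with hgdef
  have hF : ∀ S', Fmat A W S' = M - g S' := fun _ => rfl
  have hbdd : ∀ S' : Finset (Fin d), BddBelow {e : ℝ | ∃ Wt : Matrix (Fin d) (Fin m) ℝ,
      e = frobSq (A * W - colZero A S' * Wt)} := by
    intro S'
    refine ⟨0, ?_⟩
    rintro e ⟨Wt, rfl⟩
    exact frobSq_nonneg _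
  have hne : ∀ S' : Finset (Fin d), Set.Nonempty {e : ℝ | ∃ Wt : Matrix (Fin d) (Fin m) ℝ,
      e = frobSq (A * W - colZero A S' * Wt)} := fun S' => ⟨_, W, rfl⟩
  have hg_nonneg : ∀ S', 0 ≤ g S' := by
    intro S'
    apply le_csInf (hne S')
    rintro e ⟨Wt, rfl⟩
    exact frobSq_nonneg _
  have hg_le : ∀ (S' : Finset (Fin d)) (Wt : Matrix (Fin d) (Fin m) ℝ), g S' ≤ frobSq (A * W - colZero A S' * Wt) :=
    fun S' Wt => csInf_le (hbdd S') ⟨Wt, rfl⟩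
  have hg_mono : ∀ {S1 S2 : Finset (Fin d)}, S1 ⊆ S2 → g S2 ≤ g S1 := by
    intro S1 S2 h
    apply csInf_le_csInf (hbdd S2) (hne S1)
    rintro e ⟨Wt, rfl⟩
    exact ⟨Matrix.of fun i q => if i ∈ S1 then Wt i q else 0,
      by rw [colZero_subset_mul A h Wt]⟩
  have hg_empty : g ∅ = M := by
    apply le_antisymm
    · have h := hg_le ∅ 0
      rwa [colZero_empty, Matrix.zero_mul, sub_zero] at h
    · apply le_csInf (hne ∅)
      rintro e ⟨Wt, rfl⟩
      rw [colZero_empty, Matrix.zero_mul, sub_zero]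
  have hg_univ : g Finset.univ = 0 := by
    refine le_antisymm ?_ (hg_nonneg _)
    have h := hg_le Finset.univ W
    rwa [colZero_univ, sub_self, frobSq_zero] at h
  have hd' : (0:ℝ) < d := by exact_mod_cast hd
  -- monotonicity of the chain
  have key : ∀ b, b ≤ k → ∀ a, a ≤ b → S a ⊆ S b := by
    intro b
    induction b with
    | zero => intro _ a ha; rw [Nat.le_zero.mp ha]
    | succ b ih =>
      intro hb a ha
      rcases Nat.eq_or_lt_of_le ha with rfl | h
      · exact subset_rfl
      · have h' : a ≤ b := Nat.lt_succ_iff.mp h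
        have hb' : b < k := Nat.lt_of_succ_le hb
        obtain ⟨i, hi, hins, _⟩ := hstep b hb'
        exact (ih hb'.le a h').trans (hins ▸ Finset.subset_insert i (S b))
  -- main induction
  have main : ∀ t, t ≤ k → g (S t) ≤ Real.exp (-(γ * t / d)) * M := by
    intro t
    induction t with
    | zero =>
      intro _
      rw [hS0, hg_empty]
      simp
    | succ t ih =>
      intro ht
      have htk : t < k := Nat.lt_of_succ_le ht
      have iht := ih htk.le
      obtain ⟨i, hi, hins, hgr⟩ := hstep t htk
      set T : Finset (Fin d) := Finset.univ \ S t with hT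
      have hsubk : S t ⊆ S k := key k le_rfl t htk.le
      have hwk := hweak (S t) T hsubk disjoint_sdiff_self_right
      have hunion : S t ∪ T = Finset.univ :=
        Finset.union_sdiff_of_subset (Finset.subset_univ _)
      rw [hunion] at hwk
      have hstep1 : S t ⊆ S (t+1) := hins ▸ Finset.subset_insert _ _
      have hΔ : 0 ≤ g (S t) - g (S (t+1)) := sub_nonneg.mpr (hg_mono hstep1)
      have hterm : ∀ j ∈ T, Fmat A W (insert j (S t)) - Fmat A W (S t)
          ≤ g (S t) - g (S (t+1)) := by
        intro j hj
        have hgrj := hgr j (Finset.mem_sdiff.mp hj).2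
        have h1 : Fmat A W (insert j (S t)) ≤ Fmat A W (S (t+1)) := by
          rw [hins]; exact hgrj
        simp only [hF] at h1 ⊢
        linarith
      have hsum : ∑ j ∈ T, (Fmat A W (insert j (S t)) - Fmat A W (S t))
          ≤ (d : ℝ) * (g (S t) - g (S (t+1))) := by
        calc ∑ j ∈ T, (Fmat A W (insert j (S t)) - Fmat A W (S t))
            ≤ ∑ _j ∈ T, (g (S t) - g (S (t+1))) := Finset.sum_le_sum hterm
          _ = (T.card : ℝ) * (g (S t) - g (S (t+1))) := by
              rw [Finset.sum_const, nsmul_eq_mul]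
          _ ≤ (d : ℝ) * (g (S t) - g (S (t+1))) := by
              apply mul_le_mul_of_nonneg_right _ hΔ
              have h2 : T.card ≤ d := by
                simpa using Finset.card_le_univ T
              exact_mod_cast h2
      have hkey : γ * g (S t) ≤ (d : ℝ) * (g (S t) - g (S (t+1))) := by
        have h3 := hwk.trans hsum
        simp only [hF, hg_univ] at h3
        linarith
      have hstepineq : g (S (t+1)) ≤ (1 - γ / d) * g (S t) := by
        have h4 : g (S (t+1)) * d ≤ (1 - γ / d) * g (S t) * d := by
          have h5 : (1 - γ / (d:ℝ)) * g (S t) * d = d * g (S t) - γ * g (S t) := by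
            field_simp
          linarith
        exact le_of_mul_le_mul_right h4 hd'
      have hexp1 : (1 - γ / d) ≤ Real.exp (-(γ / d)) := by
        have := Real.add_one_le_exp (-(γ / d)); linarith
      have h6 : g (S (t+1)) ≤ Real.exp (-(γ / d)) * (Real.exp (-(γ * t / d)) * M) := by
        calc g (S (t+1)) ≤ (1 - γ / d) * g (S t) := hstepineq
          _ ≤ Real.exp (-(γ / d)) * g (S t) :=
              mul_le_mul_of_nonneg_right hexp1 (hg_nonneg _)
          _ ≤ Real.exp (-(γ / d)) * (Real.exp (-(γ * t / d)) * M) :=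
              mul_le_mul_of_nonneg_left iht (Real.exp_nonneg _)
      have hmulexp : Real.exp (-(γ / d)) * Real.exp (-(γ * t / d))
          = Real.exp (-(γ * ((t:ℝ) + 1) / d)) := by
        rw [← Real.exp_add]; congr 1; field_simp; ring
      rw [← mul_assoc, hmulexp] at h6
      convert h6 using 3
      push_cast
      ring
  have hfinal : frobSq (A * W - colZero A (S k) * Wh) = g (S k) := by
    symm
    apply IsLeast.csInf_eq
    constructor
    · exact ⟨Wh, rfl⟩
    · rintro e ⟨W', rfl⟩
      exact hWh W'
  rw [hfinal]
  exact main k le_rfl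
end

section
/- Let F : 2^V → ℝ₊ be a normalized non-decreasing set function that is γ-weakly submodular at budget k* for all relevant sets (γ·F(T|L) ≤ Σ_{i∈T} F(i|L) for disjoint L in the greedy chain and |T| ≤ k*). Then the greedy algorithm with budget k ≤ k* returns Ŝ satisfying F(Ŝ) ≥ (1 - e^{-γ k / k*}) · max_{|S| ≤ k*} F(S). -/
/-- Generalized greedy guarantee with comparison budget `k* ≥ k`:
`F (S k) ≥ (1 - e^{-γ k / k*}) max_{|T| ≤ k*} F T`. -/
theorem stmt8 (d k kstar : ℕ) (hk : k ≤ kstar) (hkstar : 0 < kstar)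
    (F : Finset (Fin d) → ℝ) (γ : ℝ) (hγ0 : 0 < γ) (hγ1 : γ ≤ 1)
    (hnorm : F ∅ = 0) (hnonneg : ∀ S, 0 ≤ F S)
    (hmono : ∀ S T : Finset (Fin d), S ⊆ T → F S ≤ F T)
    (hweak : ∀ L T : Finset (Fin d), Disjoint L T → T.card ≤ kstar →
      γ * (F (L ∪ T) - F L) ≤ ∑ i ∈ T, (F (insert i L) - F L))
    (S : ℕ → Finset (Fin d)) (hS0 : S 0 = ∅)
    (hstep : ∀ t < k, ∃ i ∉ S t, S (t + 1) = insert i (S t) ∧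
      ∀ j ∉ S t, F (insert j (S t)) ≤ F (insert i (S t))) :
    ∀ T : Finset (Fin d), T.card ≤ kstar →
      (1 - Real.exp (-(γ * k / kstar))) * F T ≤ F (S k) := by
  intro T hT
  have hks : (0:ℝ) < kstar := by exact_mod_cast hkstar
  set c : ℝ := 1 - γ / kstar with hc
  have hc0 : 0 ≤ c := by
    have : γ / kstar ≤ 1 := by
      rw [div_le_one hks]
      calc γ ≤ 1 := hγ1
        _ ≤ kstar := by exact_mod_cast hkstar
    simp only [hc]; linarith
  -- induction: F T - F (S t) ≤ c^t * F T for t ≤ k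
  have main : ∀ t, t ≤ k → F T - F (S t) ≤ c ^ t * F T := by
    intro t
    induction t with
    | zero => intro _; simp [hS0, hnorm]
    | succ t ih =>
      intro ht
      have htk : t < k := ht
      have hgt := ih (le_of_lt htk)
      obtain ⟨i, hi, hins, hbest⟩ := hstep t htk
      set L := S t with hL
      set T' := T \ L with hT'
      have hdisj : Disjoint L T' := Finset.sdiff_disjoint.symm
      have hcard : T'.card ≤ kstar := le_trans (Finset.card_le_card Finset.sdiff_subset) hT
      have hw := hweak L T' hdisj hcard
      have hFT : F T ≤ F (L ∪ T') := by
        apply hmono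
        intro x hx
        by_cases hxL : x ∈ L
        · exact Finset.mem_union_left _ hxL
        · exact Finset.mem_union_right _ (Finset.mem_sdiff.mpr ⟨hx, hxL⟩)
      set m : ℝ := F (S (t+1)) - F (S t) with hm
      have hm0 : 0 ≤ m := by
        have : F (S t) ≤ F (S (t+1)) := by
          rw [hins]; exact hmono _ _ (Finset.subset_insert _ _)
        linarith
      have hsum : ∑ j ∈ T', (F (insert j L) - F L) ≤ T'.card * m := by
        have := Finset.sum_le_card_nsmul T' (fun j => F (insert j L) - F L) m ?_
        · simpa [nsmul_eq_mul] using this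
        · intro j hj
          have hjL : j ∉ L := (Finset.mem_sdiff.mp hj).2
          have hb := hbest j hjL
          have : F (S (t+1)) = F (insert i L) := by rw [hins]
          simp only [hm, hL, this]
          linarith
      have hle : γ * (F T - F L) ≤ kstar * m := by
        have h1 : γ * (F T - F L) ≤ γ * (F (L ∪ T') - F L) := by
          apply mul_le_mul_of_nonneg_left _ (le_of_lt hγ0)
          linarith
        have h2 : (T'.card : ℝ) * m ≤ kstar * m := by
          apply mul_le_mul_of_nonneg_right _ hm0
          exact_mod_cast hcard
        linarith
      -- g(t+1) ≤ c * g t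
      have hstepineq : F T - F (S (t+1)) ≤ c * (F T - F L) := by
        have : γ / kstar * (F T - F L) ≤ m := by
          rw [div_mul_eq_mul_div, div_le_iff₀ hks]
          linarith [hle]
        have hexp : c * (F T - F L) = (F T - F L) - γ / kstar * (F T - F L) := by ring
        rw [hexp, hm] at *
        simp only [hL] at *
        linarith
      have hcpow : c * (F T - F L) ≤ c ^ (t+1) * F T := by
        calc c * (F T - F L) ≤ c * (c ^ t * F T) :=
              mul_le_mul_of_nonneg_left hgt hc0
          _ = c ^ (t+1) * F T := by ring
      linarith
  have hgk := main k le_rfl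
  have hpow : c ^ k ≤ Real.exp (-(γ * k / kstar)) := by
    have h1 : c ≤ Real.exp (-(γ / kstar)) := by
      have := Real.add_one_le_exp (-(γ / kstar))
      linarith
    calc c ^ k ≤ (Real.exp (-(γ / kstar))) ^ k := pow_le_pow_left₀ hc0 h1 k
      _ = Real.exp (k * -(γ / kstar)) := by rw [← Real.exp_nat_mul]
      _ = Real.exp (-(γ * k / kstar)) := by ring_nf
  have hFTnn : 0 ≤ F T := hnonneg T
  have : c ^ k * F T ≤ Real.exp (-(γ * k / kstar)) * F T :=
    mul_le_mul_of_nonneg_right hpow hFTnn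
  nlinarith [hgk]
end
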